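/- arXiv:2510.04435 — 9 statements merged into one kernel-verified Lean document; each statement's English description precedes it below -/
import Mathlib

section
/- For finite sets B ⊆ A in a metric space, MaxCut(A) ≥ MaxCut(B) + (1/4)·cut(A∖B, A∖B) + (1/2)·cut(A∖B, B). -/
open Finset

noncomputable def cut {V : Type*} [MetricSpace V] (S T : Finset V) : ℝ :=
  ∑ x ∈ S, ∑ y ∈ T, dist x y

noncomputable def maxCut {V : Type*} [MetricSpace V] [DecidableEq V] (S : Finset V) : ℝ :=
  S.powerset.sup' ⟨∅, Finset.empty_mem_powerset S⟩ (fun T => cut T (S \ T))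

section Aux
variable {V : Type*} [DecidableEq V] [MetricSpace V]

lemma myFilterNotMemPowerset (C : Finset V) (y : V) :
    C.powerset.filter (fun S => y ∉ S) = (C.erase y).powerset := by
  ext S; simp [subset_erase, and_comm]

lemma myCountNotMem (C : Finset V) {y : V} (hy : y ∈ C) :
    ((C.powerset.filter (fun S => y ∉ S)).card : ℝ) = 2 ^ C.card / 2 := by
  rw [myFilterNotMemPowerset, card_powerset, card_erase_of_mem hy]
  have h1 : 1 ≤ C.card := card_pos.mpr ⟨y, hy⟩
  rw [eq_div_iff (by norm_num)]
  push_cast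
  rw [← pow_succ]
  congr 1
  omega

lemma myCountMem (C : Finset V) {y : V} (hy : y ∈ C) :
    ((C.powerset.filter (fun S => y ∈ S)).card : ℝ) = 2 ^ C.card / 2 := by
  have h := Finset.card_filter_add_card_filter_not (s := C.powerset)
    (p := fun S => y ∈ S)
  have h2 := myCountNotMem C hy
  have h3 : (C.powerset.card : ℝ) = 2 ^ C.card := by rw [card_powerset]; push_cast; ring
  have h4 : ((C.powerset.filter (fun S => y ∈ S)).card : ℝ)
      + ((C.powerset.filter (fun S => y ∉ S)).card : ℝ) = (C.powerset.card : ℝ) := by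
    exact_mod_cast congrArg (Nat.cast : ℕ → ℝ) h
  linarith

lemma myCountPair (C : Finset V) {x y : V} (hx : x ∈ C) (hy : y ∈ C) (hxy : x ≠ y) :
    ((C.powerset.filter (fun S => x ∈ S ∧ y ∉ S)).card : ℝ) = 2 ^ C.card / 4 := by
  have heq : C.powerset.filter (fun S => x ∈ S ∧ y ∉ S)
      = (C.erase y).powerset.filter (fun S => x ∈ S) := by
    ext S; simp [subset_erase]; tauto
  rw [heq, myCountMem _ (mem_erase.mpr ⟨hxy, hx⟩), card_erase_of_mem hy]
  have h1 : 1 ≤ C.card := card_pos.mpr ⟨y, hy⟩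
  rw [div_eq_div_iff (by norm_num) (by norm_num)]
  rw [show (4:ℝ) = 2 * 2 by norm_num, ← mul_assoc, ← pow_succ]
  congr 2
  omega

lemma mySumPowersetSingle (C : Finset V) (h : V → ℝ) :
    ∑ S ∈ C.powerset, ∑ x ∈ S, h x = (2 ^ C.card / 2 : ℝ) * ∑ x ∈ C, h x := by
  have step : ∀ S ∈ C.powerset, ∑ x ∈ S, h x = ∑ x ∈ C, if x ∈ S then h x else 0 := by
    intro S hS
    rw [Finset.sum_ite_mem, Finset.inter_eq_right.mpr (mem_powerset.mp hS)]
  rw [Finset.sum_congr rfl step, Finset.sum_comm]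
  rw [Finset.mul_sum]
  refine Finset.sum_congr rfl fun x hx => ?_
  rw [Finset.sum_ite, Finset.sum_const, Finset.sum_const_zero, add_zero, nsmul_eq_mul,
    myCountMem C hx]

lemma myCutComm (S T : Finset V) : cut S T = cut T S := by
  rw [cut, cut, Finset.sum_comm]
  simp [dist_comm]

lemma myCutSdiffRight (T : Finset V) {S C : Finset V} (hS : S ⊆ C) :
    cut T (C \ S) = cut T C - cut T S := by
  unfold cut
  rw [← Finset.sum_sub_distrib]
  exact Finset.sum_congr rfl fun x _ => Finset.sum_sdiff_eq_sub hS

lemma myCutUnionLeft {S T : Finset V} (h : Disjoint S T) (U : Finset V) :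
    cut (S ∪ T) U = cut S U + cut T U := by
  unfold cut; exact Finset.sum_union h

lemma myCutUnionRight (S : Finset V) {T U : Finset V} (h : Disjoint T U) :
    cut S (T ∪ U) = cut S T + cut S U := by
  unfold cut
  rw [← Finset.sum_add_distrib]
  exact Finset.sum_congr rfl fun x _ => Finset.sum_union h

lemma mySumCutLeft (C U : Finset V) :
    ∑ S ∈ C.powerset, cut S U = (2 ^ C.card / 2 : ℝ) * cut C U := by
  unfold cut
  exact mySumPowersetSingle C (fun x => ∑ y ∈ U, dist x y)

lemma mySumCutRight (C T : Finset V) :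
    ∑ S ∈ C.powerset, cut T S = (2 ^ C.card / 2 : ℝ) * cut T C := by
  have h : ∀ S : Finset V, cut T S = ∑ y ∈ S, ∑ x ∈ T, dist x y := by
    intro S; rw [cut]; exact Finset.sum_comm
  simp_rw [h]
  exact mySumPowersetSingle C (fun y => ∑ x ∈ T, dist x y)

lemma mySumSelfCut (C : Finset V) :
    ∑ S ∈ C.powerset, cut S (C \ S) = (2 ^ C.card / 4 : ℝ) * cut C C := by
  have step : ∀ S ∈ C.powerset,
      cut S (C \ S) = ∑ x ∈ C, ∑ y ∈ C, if x ∈ S ∧ y ∉ S then dist x y else 0 := by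
    intro S hS
    have hSC := mem_powerset.mp hS
    have h1 : S = C.filter (fun x => x ∈ S) := by
      rw [Finset.filter_mem_eq_inter, Finset.inter_eq_right.mpr hSC]
    have h2 : C \ S = C.filter (fun y => y ∉ S) := sdiff_eq_filter C S
    rw [cut, h2]
    conv_lhs => rw [h1]
    rw [Finset.sum_filter]
    refine Finset.sum_congr rfl fun x _ => ?_
    by_cases hx : x ∈ S
    · simp only [hx, true_and, if_true, Finset.sum_filter]
      refine Finset.sum_congr rfl fun a ha => ?_
      by_cases has : a ∈ S <;> simp [has, ha]
    · simp [hx, Finset.sum_filter]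
  rw [Finset.sum_congr rfl step, Finset.sum_comm]
  have swap2 : ∀ x ∈ C, ∑ S ∈ C.powerset, ∑ y ∈ C, (if x ∈ S ∧ y ∉ S then dist x y else 0)
      = ∑ y ∈ C, ∑ S ∈ C.powerset, (if x ∈ S ∧ y ∉ S then dist x y else 0) := by
    intro x _; rw [Finset.sum_comm]
  rw [Finset.sum_congr rfl swap2, cut, Finset.mul_sum]
  refine Finset.sum_congr rfl fun x hx => ?_
  rw [Finset.mul_sum]
  refine Finset.sum_congr rfl fun y hy => ?_
  rw [Finset.sum_ite, Finset.sum_const, Finset.sum_const_zero, add_zero, nsmul_eq_mul]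
  by_cases hxy : x = y
  · subst hxy; simp
  · rw [myCountPair C hx hy hxy]

end Aux

theorem maxCut_superset_lower_bound {V : Type*} [MetricSpace V] [DecidableEq V]
    (A B : Finset V) (hBA : B ⊆ A) :
    maxCut B + (1 / 4 : ℝ) * cut (A \ B) (A \ B) + (1 / 2 : ℝ) * cut (A \ B) B ≤ maxCut A := by
  classical
  set C := A \ B with hC
  -- pick optimal cut of B
  obtain ⟨T₀, hT₀mem, hT₀⟩ := Finset.exists_mem_eq_sup' (⟨∅, Finset.empty_mem_powerset B⟩ :
    B.powerset.Nonempty) (fun T => cut T (B \ T))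
  have hT₀B : T₀ ⊆ B := mem_powerset.mp hT₀mem
  set n := C.card with hn
  set target : ℝ := cut T₀ (B \ T₀) + (1 / 4 : ℝ) * cut C C + (1 / 2 : ℝ) * cut C B
    with htarget
  -- decomposition of each extended cut
  have decomp : ∀ S ∈ C.powerset,
      cut (T₀ ∪ S) (A \ (T₀ ∪ S))
        = cut T₀ (B \ T₀) + cut T₀ (C \ S) + cut S (B \ T₀) + cut S (C \ S) := by
    intro S hS
    have hSC : S ⊆ C := mem_powerset.mp hS
    have hSnB : ∀ x, x ∈ S → x ∈ A ∧ x ∉ B := by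
      intro x hx; exact mem_sdiff.mp (hSC hx)
    have hA : A \ (T₀ ∪ S) = (B \ T₀) ∪ (C \ S) := by
      ext x
      simp only [hC, mem_sdiff, mem_union]
      constructor
      · rintro ⟨hxA, hx⟩
        push_neg at hx
        by_cases hxB : x ∈ B
        · exact Or.inl ⟨hxB, hx.1⟩
        · exact Or.inr ⟨⟨hxA, hxB⟩, hx.2⟩
      · rintro (⟨hxB, hxT⟩ | ⟨⟨hxA, hxB⟩, hxS⟩)
        · refine ⟨hBA hxB, ?_⟩
          push_neg
          exact ⟨hxT, fun hxS => (hSnB x hxS).2 hxB⟩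
        · refine ⟨hxA, ?_⟩
          push_neg
          exact ⟨fun hxT => hxB (hT₀B hxT), hxS⟩
    have hd1 : Disjoint T₀ S := by
      rw [Finset.disjoint_left]
      intro x hx hxS
      exact (hSnB x hxS).2 (hT₀B hx)
    have hd2 : Disjoint (B \ T₀) (C \ S) := by
      rw [Finset.disjoint_left]
      intro x hx hx2
      exact (mem_sdiff.mp (mem_sdiff.mp hx2).1).2 (mem_sdiff.mp hx).1
    rw [hA, myCutUnionLeft hd1, myCutUnionRight _ hd2, myCutUnionRight _ hd2]
    ring
  -- sum of extended cuts over all subsets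
  have hsum : ∑ S ∈ C.powerset, cut (T₀ ∪ S) (A \ (T₀ ∪ S)) = (2 ^ n : ℝ) * target := by
    rw [Finset.sum_congr rfl decomp]
    have e1 : ∑ S ∈ C.powerset, cut T₀ (C \ S)
        = (2 ^ n : ℝ) * cut T₀ C - (2 ^ n / 2 : ℝ) * cut T₀ C := by
      have : ∀ S ∈ C.powerset, cut T₀ (C \ S) = cut T₀ C - cut T₀ S := by
        intro S hS; exact myCutSdiffRight T₀ (mem_powerset.mp hS)
      rw [Finset.sum_congr rfl this, Finset.sum_sub_distrib, Finset.sum_const,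
        card_powerset, mySumCutRight, nsmul_eq_mul]
      push_cast
      ring
    have e2 := mySumCutLeft C (B \ T₀)
    have e3 := mySumSelfCut C
    have e4 : ∑ S ∈ C.powerset, cut T₀ (B \ T₀) = (2 ^ n : ℝ) * cut T₀ (B \ T₀) := by
      rw [Finset.sum_const, card_powerset, nsmul_eq_mul]
      push_cast
      ring
    simp only [Finset.sum_add_distrib]
    rw [e1, e2, e3, e4]
    have hsplit : cut C B = cut C T₀ + cut C (B \ T₀) := by
      rw [← myCutUnionRight C (Finset.disjoint_sdiff), Finset.union_sdiff_of_subset hT₀B]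
    have hcomm : cut T₀ C = cut C T₀ := myCutComm _ _
    rw [htarget, hsplit, hcomm]
    ring
  -- averaging: some subset achieves at least the target
  have havg : ∃ S ∈ C.powerset, target ≤ cut (T₀ ∪ S) (A \ (T₀ ∪ S)) := by
    apply Finset.exists_le_of_sum_le ⟨∅, Finset.empty_mem_powerset C⟩
    rw [hsum, Finset.sum_const, card_powerset, nsmul_eq_mul]
    push_cast
    ring_nf
    exact le_refl _
  obtain ⟨S, hSmem, hSle⟩ := havg
  have hmemA : T₀ ∪ S ∈ A.powerset := by
    rw [mem_powerset]
    exact Finset.union_subset (hT₀B.trans hBA) ((mem_powerset.mp hSmem).trans (sdiff_subset))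
  have hle : cut (T₀ ∪ S) (A \ (T₀ ∪ S)) ≤ maxCut A := Finset.le_sup' (fun T => cut T (A \ T)) hmemA
  have hmB : maxCut B = cut T₀ (B \ T₀) := hT₀
  calc maxCut B + (1 / 4 : ℝ) * cut C C + (1 / 2 : ℝ) * cut C B = target := by
        rw [htarget, hmB]
    _ ≤ cut (T₀ ∪ S) (A \ (T₀ ∪ S)) := hSle
    _ ≤ maxCut A := hle
end

section
/- Let p_1,…,p_n be points in a metric space, R_t := Σ_{i=1}^t dist(p_t, p_i), and Q_t := Σ_{i=1}^t Σ_{j=1}^t dist(p_i, p_j). For any t with Q_t > 0, it holds that 2R_t / Q_t ≥ (Σ_{i=1}^n dist(p_t, p_i)) / Q_n. -/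
open Finset

noncomputable def Rpre {V : Type*} [MetricSpace V] (p : ℕ → V) (t : ℕ) : ℝ :=
  ∑ i ∈ Finset.Icc 1 t, dist (p t) (p i)

noncomputable def Qpre {V : Type*} [MetricSpace V] (p : ℕ → V) (t : ℕ) : ℝ :=
  ∑ i ∈ Finset.Icc 1 t, ∑ j ∈ Finset.Icc 1 t, dist (p i) (p j)

lemma key_lemma {V : Type*} [MetricSpace V] (p : ℕ → V) (t : ℕ) (q : V) :
    dist (p t) q * Qpre p t ≤ 4 * Rpre p t * ∑ k ∈ Finset.Icc 1 t, dist (p k) q := by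
  set I := Finset.Icc 1 t with hI
  set R := Rpre p t with hR
  set s := ∑ k ∈ I, dist (p k) q with hs
  have hR0 : 0 ≤ R := Finset.sum_nonneg fun i _ => dist_nonneg
  have hs0 : 0 ≤ s := Finset.sum_nonneg fun i _ => dist_nonneg
  have hD0 : 0 ≤ dist (p t) q := dist_nonneg
  have hQR : Qpre p t ≤ 2 * (I.card : ℝ) * R := by
    have h1 : Qpre p t ≤ ∑ j ∈ I, ∑ k ∈ I, (dist (p t) (p j) + dist (p t) (p k)) := by
      refine Finset.sum_le_sum fun j _ => Finset.sum_le_sum fun k _ => ?_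
      calc dist (p j) (p k) ≤ dist (p j) (p t) + dist (p t) (p k) := dist_triangle _ _ _
        _ = dist (p t) (p j) + dist (p t) (p k) := by rw [dist_comm]
    have h2 : ∑ j ∈ I, ∑ k ∈ I, (dist (p t) (p j) + dist (p t) (p k))
        = 2 * (I.card : ℝ) * R := by
      simp [Finset.sum_add_distrib, Finset.sum_const, nsmul_eq_mul, ← Finset.mul_sum, hR,
        Rpre, ← hI]
      ring
    linarith
  have hQs : Qpre p t ≤ 2 * (I.card : ℝ) * s := by
    have h1 : Qpre p t ≤ ∑ j ∈ I, ∑ k ∈ I, (dist (p j) q + dist (p k) q) := by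
      refine Finset.sum_le_sum fun j _ => Finset.sum_le_sum fun k _ => ?_
      calc dist (p j) (p k) ≤ dist (p j) q + dist q (p k) := dist_triangle _ _ _
        _ = dist (p j) q + dist (p k) q := by rw [dist_comm q]
    have h2 : ∑ j ∈ I, ∑ k ∈ I, (dist (p j) q + dist (p k) q)
        = 2 * (I.card : ℝ) * s := by
      simp [Finset.sum_add_distrib, Finset.sum_const, nsmul_eq_mul, ← Finset.mul_sum, hs]
      ring
    linarith
  have htD : (I.card : ℝ) * dist (p t) q ≤ R + s := by
    have h1 : ∑ k ∈ I, dist (p t) q ≤ ∑ k ∈ I, (dist (p t) (p k) + dist (p k) q) :=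
      Finset.sum_le_sum fun k _ => dist_triangle _ _ _
    have h2 : ∑ k ∈ I, dist (p t) q = (I.card : ℝ) * dist (p t) q := by
      simp [Finset.sum_const, nsmul_eq_mul]
    have h3 : ∑ k ∈ I, (dist (p t) (p k) + dist (p k) q) = R + s := by
      simp [Finset.sum_add_distrib, hR, Rpre, hs, ← hI]
    linarith
  rcases le_total R s with h | h
  · have step : dist (p t) q * Qpre p t ≤ dist (p t) q * (2 * (I.card : ℝ) * R) :=
      mul_le_mul_of_nonneg_left hQR hD0
    nlinarith [mul_le_mul_of_nonneg_left htD (mul_nonneg (by norm_num : (0:ℝ) ≤ 2) hR0)]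
  · have step : dist (p t) q * Qpre p t ≤ dist (p t) q * (2 * (I.card : ℝ) * s) :=
      mul_le_mul_of_nonneg_left hQs hD0
    nlinarith [mul_le_mul_of_nonneg_left htD (mul_nonneg (by norm_num : (0:ℝ) ≤ 2) hs0)]

theorem prefix_ratio_bound {V : Type*} [MetricSpace V] (p : ℕ → V) (n t : ℕ)
    (ht : 1 ≤ t) (htn : t ≤ n) (hQt : 0 < Qpre p t) (hQn : 0 < Qpre p n) :
    (∑ i ∈ Finset.Icc 1 n, dist (p t) (p i)) / Qpre p n ≤ 2 * Rpre p t / Qpre p t := by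
  rw [div_le_div_iff₀ hQn hQt]
  have hR0 : 0 ≤ Rpre p t := Finset.sum_nonneg fun i _ => dist_nonneg
  have hIoc : ∀ m : ℕ, Finset.Icc 1 m = Finset.Ioc 0 m := fun m => by
    rw [← Finset.Icc_add_one_left_eq_Ioc, zero_add]
  -- split the sum over Icc 1 n
  have hsplit : ∀ f : ℕ → ℝ, ∑ i ∈ Finset.Icc 1 n, f i
      = (∑ i ∈ Finset.Icc 1 t, f i) + ∑ i ∈ Finset.Ioc t n, f i := by
    intro f
    rw [hIoc n, hIoc t, Finset.sum_Ioc_consecutive _ (Nat.zero_le t) htn]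
  set B := ∑ i ∈ Finset.Ioc t n, dist (p t) (p i) with hB
  set C := ∑ i ∈ Finset.Ioc t n, ∑ k ∈ Finset.Icc 1 t, dist (p k) (p i) with hC
  have hC0 : 0 ≤ C := Finset.sum_nonneg fun i _ => Finset.sum_nonneg fun k _ => dist_nonneg
  have hDsum : ∑ i ∈ Finset.Icc 1 n, dist (p t) (p i) = Rpre p t + B := by
    rw [hsplit]; rfl
  -- bound B * Qt by key lemma
  have hBQ : B * Qpre p t ≤ 4 * Rpre p t * C := by
    rw [hB, hC, Finset.sum_mul, Finset.mul_sum]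
    exact Finset.sum_le_sum fun i _ => key_lemma p t (p i)
  -- Qn ≥ Qt + 2C
  have hQnC : Qpre p t + 2 * C ≤ Qpre p n := by
    have expand : Qpre p n = (∑ i ∈ Finset.Icc 1 t, ∑ j ∈ Finset.Icc 1 n, dist (p i) (p j))
        + ∑ i ∈ Finset.Ioc t n, ∑ j ∈ Finset.Icc 1 n, dist (p i) (p j) := by
      rw [Qpre, hsplit]
    have row1 : ∀ i, ∑ j ∈ Finset.Icc 1 n, dist (p i) (p j)
        = (∑ j ∈ Finset.Icc 1 t, dist (p i) (p j)) + ∑ j ∈ Finset.Ioc t n, dist (p i) (p j) :=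
      fun i => hsplit _
    have part1 : Qpre p t + ∑ i ∈ Finset.Icc 1 t, ∑ j ∈ Finset.Ioc t n, dist (p i) (p j)
        ≤ ∑ i ∈ Finset.Icc 1 t, ∑ j ∈ Finset.Icc 1 n, dist (p i) (p j) := by
      rw [Qpre, ← Finset.sum_add_distrib]
      exact le_of_eq (Finset.sum_congr rfl fun i _ => (row1 i).symm)
    have swap : ∑ i ∈ Finset.Icc 1 t, ∑ j ∈ Finset.Ioc t n, dist (p i) (p j) = C := by
      rw [hC, Finset.sum_comm]
    have part2 : C ≤ ∑ i ∈ Finset.Ioc t n, ∑ j ∈ Finset.Icc 1 n, dist (p i) (p j) := by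
      rw [hC]
      refine Finset.sum_le_sum fun i _ => ?_
      calc ∑ k ∈ Finset.Icc 1 t, dist (p k) (p i)
          = ∑ k ∈ Finset.Icc 1 t, dist (p i) (p k) := by
            exact Finset.sum_congr rfl fun k _ => dist_comm _ _
        _ ≤ ∑ j ∈ Finset.Icc 1 n, dist (p i) (p j) := by
            refine Finset.sum_le_sum_of_subset_of_nonneg
              (Finset.Icc_subset_Icc_right htn) fun _ _ _ => dist_nonneg
    linarith [expand, part1, part2, swap]
  rw [hDsum, add_mul]
  have h1 : Rpre p t * Qpre p t ≤ 2 * Rpre p t * Qpre p t - 4 * Rpre p t * C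
      + 4 * Rpre p t * C := by ring_nf; nlinarith [hQt.le]
  nlinarith [mul_le_mul_of_nonneg_left hQnC (mul_nonneg (by norm_num : (0:ℝ) ≤ 2) hR0)]
end

section
/- Let p_1,…,p_n be points in a metric space with Q_t := Σ_{i=1}^t Σ_{j=1}^t dist(p_i,p_j) and R_t := Σ_{i=1}^t dist(p_t,p_i). Suppose all nonzero pairwise distances lie in [1, Δ] and Q_2 > 0. Then Σ_{k=3}^n R_k/Q_k ≤ (1/2)·ln(Δ n² / 2). -/
open Finset

lemma Rpre_nonneg {V : Type*} [MetricSpace V] (p : ℕ → V) (t : ℕ) : 0 ≤ Rpre p t :=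
  Finset.sum_nonneg fun _ _ => dist_nonneg

lemma Qpre_succ {V : Type*} [MetricSpace V] (p : ℕ → V) (t : ℕ) :
    Qpre p (t + 1) = Qpre p t + 2 * Rpre p (t + 1) := by
  have hnot : t + 1 ∉ Finset.Icc 1 t := by simp
  have hins : Finset.Icc 1 (t + 1) = insert (t + 1) (Finset.Icc 1 t) := by
    ext x; simp [Finset.mem_Icc, Nat.lt_succ_iff]; omega
  have hR : Rpre p (t + 1) = ∑ i ∈ Finset.Icc 1 t, dist (p (t + 1)) (p i) := by
    rw [Rpre, hins, Finset.sum_insert hnot, dist_self, zero_add]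
  rw [Qpre, hins, Finset.sum_insert hnot, Finset.sum_insert hnot, dist_self]
  simp only [Finset.sum_insert hnot]
  rw [Finset.sum_add_distrib]
  have hsym : ∑ i ∈ Finset.Icc 1 t, dist (p i) (p (t + 1))
      = ∑ i ∈ Finset.Icc 1 t, dist (p (t + 1)) (p i) := by
    simp [dist_comm]
  rw [hsym, hR, Qpre]; ring

lemma Qpre_pos {V : Type*} [MetricSpace V] (p : ℕ → V) (hQ2 : 0 < Qpre p 2) :
    ∀ k, 2 ≤ k → 0 < Qpre p k := by
  intro k hk
  induction k with
  | zero => omega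
  | succ m ih =>
    rcases Nat.lt_or_ge m 2 with hm | hm
    · interval_cases m
      · omega
      · exact hQ2
    · have := ih hm
      rw [Qpre_succ]
      nlinarith [Rpre_nonneg p (m + 1)]

lemma telescope {V : Type*} [MetricSpace V] (p : ℕ → V) (hQ2 : 0 < Qpre p 2) :
    ∀ n, 2 ≤ n → ∑ k ∈ Finset.Icc 3 n, Rpre p k / Qpre p k
      ≤ (1 / 2 : ℝ) * (Real.log (Qpre p n) - Real.log (Qpre p 2)) := by
  intro n hn
  induction n with
  | zero => omega
  | succ m ih =>
    rcases Nat.lt_or_ge m 2 with hm | hm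
    · interval_cases m
      · omega
      · simp
    · have ihm := ih hm
      have h3 : 3 ≤ m + 1 := by omega
      rw [show Finset.Icc 3 (m + 1) = insert (m + 1) (Finset.Icc 3 m) by
        ext x; simp [Finset.mem_Icc]; omega]
      rw [Finset.sum_insert (by simp)]
      have hQm : 0 < Qpre p m := Qpre_pos p hQ2 m hm
      have hQm1 : 0 < Qpre p (m + 1) := Qpre_pos p hQ2 (m + 1) (by omega)
      -- key step: Rpre p (m+1) / Qpre p (m+1) ≤ (1/2)*(log Q_{m+1} - log Q_m)
      have key : Rpre p (m + 1) / Qpre p (m + 1)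
          ≤ (1 / 2 : ℝ) * (Real.log (Qpre p (m + 1)) - Real.log (Qpre p m)) := by
        have hlog : Real.log (Qpre p m / Qpre p (m + 1))
            ≤ Qpre p m / Qpre p (m + 1) - 1 :=
          Real.log_le_sub_one_of_pos (div_pos hQm hQm1)
        rw [Real.log_div (ne_of_gt hQm) (ne_of_gt hQm1)] at hlog
        have hQs := Qpre_succ p m
        have hfrac : Qpre p m / Qpre p (m + 1) - 1
            = - (2 * Rpre p (m + 1) / Qpre p (m + 1)) := by
          field_simp
          linarith [hQs]
        rw [hfrac] at hlog
        have h2 : 2 * Rpre p (m + 1) / Qpre p (m + 1)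
            ≤ Real.log (Qpre p (m + 1)) - Real.log (Qpre p m) := by linarith
        have h3' : 2 * Rpre p (m + 1) / Qpre p (m + 1)
            = 2 * (Rpre p (m + 1) / Qpre p (m + 1)) := mul_div_assoc 2 _ _
        linarith
      linarith

theorem sum_ratio_log_bound {V : Type*} [MetricSpace V] (p : ℕ → V) (n : ℕ) (hn : 2 ≤ n)
    (Δ : ℝ) (hΔ : 1 ≤ Δ)
    (hdist : ∀ i ∈ Finset.Icc 1 n, ∀ j ∈ Finset.Icc 1 n,
      dist (p i) (p j) ≠ 0 → 1 ≤ dist (p i) (p j) ∧ dist (p i) (p j) ≤ Δ)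
    (hQ2 : 0 < Qpre p 2) :
    ∑ k ∈ Finset.Icc 3 n, Rpre p k / Qpre p k ≤ (1 / 2 : ℝ) * Real.log (Δ * (n : ℝ) ^ 2 / 2) := by
  have htel := telescope p hQ2 n hn
  -- Q_2 = 2 * dist (p 1) (p 2)
  have hQ2eq : Qpre p 2 = 2 * dist (p 1) (p 2) := by
    rw [Qpre, show Finset.Icc 1 2 = {1, 2} by decide]
    simp [dist_self, dist_comm]
    ring
  have h1mem : (1 : ℕ) ∈ Finset.Icc 1 n := by simp; omega
  have h2mem : (2 : ℕ) ∈ Finset.Icc 1 n := by simp [Finset.mem_Icc]; omega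
  have hd12 : dist (p 1) (p 2) ≠ 0 := by
    intro h; rw [hQ2eq, h] at hQ2; norm_num at hQ2
  have hd12ge : 1 ≤ dist (p 1) (p 2) := (hdist 1 h1mem 2 h2mem hd12).1
  have hQ2ge : (2 : ℝ) ≤ Qpre p 2 := by rw [hQ2eq]; linarith
  -- Q_n ≤ Δ * n^2
  have hbound : ∀ i ∈ Finset.Icc 1 n, ∀ j ∈ Finset.Icc 1 n, dist (p i) (p j) ≤ Δ := by
    intro i hi j hj
    by_cases h : dist (p i) (p j) = 0
    · rw [h]; linarith
    · exact (hdist i hi j hj h).2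
  have hQn : Qpre p n ≤ Δ * (n : ℝ) ^ 2 := by
    have : Qpre p n ≤ ∑ i ∈ Finset.Icc 1 n, ∑ j ∈ Finset.Icc 1 n, Δ := by
      apply Finset.sum_le_sum; intro i hi
      apply Finset.sum_le_sum; intro j hj
      exact hbound i hi j hj
    have h2 : (∑ _i ∈ Finset.Icc 1 n, ∑ _j ∈ Finset.Icc 1 n, Δ) = Δ * (n : ℝ) ^ 2 := by
      simp [Nat.card_Icc]; ring
    rw [h2] at this; exact this
  have hQnpos : 0 < Qpre p n := Qpre_pos p hQ2 n hn
  have hn2pos : (0 : ℝ) < Δ * (n : ℝ) ^ 2 := by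
    have : (0:ℝ) < (n : ℝ) := by exact_mod_cast Nat.lt_of_lt_of_le (by norm_num) hn
    positivity
  have hlog1 : Real.log (Qpre p n) ≤ Real.log (Δ * (n : ℝ) ^ 2) :=
    Real.log_le_log hQnpos hQn
  have hlog2 : Real.log 2 ≤ Real.log (Qpre p 2) :=
    Real.log_le_log (by norm_num) hQ2ge
  have hdivlog : Real.log (Δ * (n : ℝ) ^ 2 / 2)
      = Real.log (Δ * (n : ℝ) ^ 2) - Real.log 2 :=
    Real.log_div (ne_of_gt hn2pos) (by norm_num)
  rw [hdivlog]
  calc ∑ k ∈ Finset.Icc 3 n, Rpre p k / Qpre p k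
      ≤ (1 / 2 : ℝ) * (Real.log (Qpre p n) - Real.log (Qpre p 2)) := htel
    _ ≤ (1 / 2 : ℝ) * (Real.log (Δ * (n : ℝ) ^ 2) - Real.log 2) := by linarith
end

section
/- Let B ⊆ A be finite subsets of a metric space. If cut(A∖B, B) ≤ 4β·cut(B,B) for some β > 0 and B is nonempty with cut(B,B) > 0, then |A∖B| ≤ 8β·|B|. -/
open Finset

theorem card_diff_le {V : Type*} [MetricSpace V] [DecidableEq V]
    (A B : Finset V) (hBA : B ⊆ A) (hBne : B.Nonempty) (hBB : 0 < cut B B)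
    (β : ℝ) (hβ : 0 < β) (h : cut (A \ B) B ≤ 4 * β * cut B B) :
    ((A \ B).card : ℝ) ≤ 8 * β * (B.card : ℝ) := by
  have hBcard : (0 : ℝ) < B.card := by exact_mod_cast hBne.card_pos
  -- per-point bound: for u, cut B B ≤ 2 * |B| * ∑_{y∈B} dist u y
  have key : ∀ u : V, cut B B ≤ 2 * B.card * ∑ y ∈ B, dist u y := by
    intro u
    have : cut B B ≤ ∑ x ∈ B, ∑ y ∈ B, (dist x u + dist u y) := by
      apply Finset.sum_le_sum; intro x _
      apply Finset.sum_le_sum; intro y _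
      exact dist_triangle x u y
    calc cut B B ≤ ∑ x ∈ B, ∑ y ∈ B, (dist x u + dist u y) := this
      _ = (B.card : ℝ) * ∑ x ∈ B, dist u x + (B.card : ℝ) * ∑ y ∈ B, dist u y := by
          simp only [Finset.sum_add_distrib, Finset.sum_const, nsmul_eq_mul, Finset.mul_sum, Finset.sum_mul]; simp [dist_comm]
      _ = 2 * B.card * ∑ y ∈ B, dist u y := by ring
  have lower : ((A \ B).card : ℝ) * cut B B ≤ 2 * B.card * cut (A \ B) B := by
    have : ∑ u ∈ A \ B, cut B B ≤ ∑ u ∈ A \ B, 2 * B.card * ∑ y ∈ B, dist u y :=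
      Finset.sum_le_sum fun u _ => key u
    simpa [Finset.sum_const, nsmul_eq_mul, cut, Finset.mul_sum] using this
  have := lower.trans (by nlinarith [hBcard] : 2 * (B.card : ℝ) * cut (A \ B) B ≤ 2 * B.card * (4 * β * cut B B))
  have h8 : ((A \ B).card : ℝ) * cut B B ≤ (8 * β * B.card) * cut B B := by nlinarith
  exact le_of_mul_le_mul_right h8 hBB
end

section
/- Let B ⊆ A ⊆ V be finite subsets of a metric space with cut(B,B) > 0, and suppose cut(A∖B, B) ≤ 4β·cut(B,B) and |A∖B| ≤ 8β·|B| for some β ∈ (0,1). Then for any finite C ⊆ V, cut(A∖B, C) ≤ 16β·cut(B, C). -/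
open Finset

theorem cut_diff_C_bound {V : Type*} [MetricSpace V] [DecidableEq V]
    (A B C : Finset V) (hBA : B ⊆ A) (hBB : 0 < cut B B)
    (β : ℝ) (hβ : 0 < β) (hβ1 : β < 1)
    (h1 : cut (A \ B) B ≤ 4 * β * cut B B)
    (h2 : ((A \ B).card : ℝ) ≤ 8 * β * (B.card : ℝ)) :
    cut (A \ B) C ≤ 16 * β * cut B C := by
  have hBne : B.Nonempty := by
    by_contra h
    rw [Finset.not_nonempty_iff_eq_empty] at h
    simp [h, cut] at hBB
  have hcard : (0:ℝ) < B.card := by exact_mod_cast Finset.card_pos.mpr hBne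
  have key : ∀ c, ∑ x ∈ A \ B, dist x c ≤ 16 * β * ∑ y ∈ B, dist y c := by
    intro c
    have hS2 : 0 ≤ ∑ y ∈ B, dist y c := Finset.sum_nonneg fun y _ => dist_nonneg
    have h1' : (B.card : ℝ) * ∑ x ∈ A \ B, dist x c ≤
        cut (A \ B) B + (A \ B).card * ∑ y ∈ B, dist y c := by
      have step : ∀ x ∈ A \ B, (B.card : ℝ) * dist x c ≤ ∑ y ∈ B, (dist x y + dist y c) := by
        intro x _
        calc (B.card : ℝ) * dist x c = ∑ _y ∈ B, dist x c := by
              rw [Finset.sum_const, nsmul_eq_mul]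
          _ ≤ ∑ y ∈ B, (dist x y + dist y c) :=
              Finset.sum_le_sum fun y _ => dist_triangle x y c
      calc (B.card : ℝ) * ∑ x ∈ A \ B, dist x c
          = ∑ x ∈ A \ B, (B.card : ℝ) * dist x c := by rw [Finset.mul_sum]
        _ ≤ ∑ x ∈ A \ B, ∑ y ∈ B, (dist x y + dist y c) := Finset.sum_le_sum step
        _ = cut (A \ B) B + ∑ _x ∈ A \ B, ∑ y ∈ B, dist y c := by
            simp [cut, Finset.sum_add_distrib]
        _ = cut (A \ B) B + (A \ B).card * ∑ y ∈ B, dist y c := by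
            rw [Finset.sum_const, nsmul_eq_mul]
    have h2' : cut B B ≤ 2 * B.card * ∑ y ∈ B, dist y c := by
      calc cut B B = ∑ x ∈ B, ∑ y ∈ B, dist x y := rfl
        _ ≤ ∑ x ∈ B, ∑ y ∈ B, (dist x c + dist y c) := by
            refine Finset.sum_le_sum fun x _ => Finset.sum_le_sum fun y _ => ?_
            calc dist x y ≤ dist x c + dist c y := dist_triangle x c y
              _ = dist x c + dist y c := by rw [dist_comm c y]
        _ = 2 * B.card * ∑ y ∈ B, dist y c := by
            simp [Finset.sum_add_distrib, Finset.sum_const, nsmul_eq_mul, Finset.mul_sum]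
            rw [← Finset.sum_add_distrib]
            exact Finset.sum_congr rfl fun x _ => by ring
    have hmul : (B.card : ℝ) * ∑ x ∈ A \ B, dist x c ≤
        (B.card : ℝ) * (16 * β * ∑ y ∈ B, dist y c) := by
      calc (B.card : ℝ) * ∑ x ∈ A \ B, dist x c
          ≤ cut (A \ B) B + (A \ B).card * ∑ y ∈ B, dist y c := h1'
        _ ≤ 4 * β * cut B B + (8 * β * B.card) * ∑ y ∈ B, dist y c := by
            gcongr
        _ ≤ 4 * β * (2 * B.card * ∑ y ∈ B, dist y c) + (8 * β * B.card) * ∑ y ∈ B, dist y c := by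
            gcongr
        _ = (B.card : ℝ) * (16 * β * ∑ y ∈ B, dist y c) := by ring
    exact le_of_mul_le_mul_left hmul hcard
  calc cut (A \ B) C = ∑ c ∈ C, ∑ x ∈ A \ B, dist x c := Finset.sum_comm
    _ ≤ ∑ c ∈ C, 16 * β * ∑ y ∈ B, dist y c := Finset.sum_le_sum fun c _ => key c
    _ = 16 * β * ∑ c ∈ C, ∑ y ∈ B, dist y c := by rw [Finset.mul_sum]
    _ = 16 * β * cut B C := by rw [Finset.sum_comm]; rfl
end

section
/- Let B ⊆ A ⊆ V and C ⊆ V be finite sets in a metric space such that cut(A∖B, A∪C) ≤ α·MaxCut(B∪C) for some α ∈ (0,1). Then MaxCut(A∪C) ≤ (1+α)·MaxCut(B∪C), and consequently (1−α)·MaxCut(A∪C) ≤ MaxCut(B∪C). -/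
open Finset

lemma cut_mono {V : Type*} [MetricSpace V] {S S' T T' : Finset V}
    (h1 : S ⊆ S') (h2 : T ⊆ T') : cut S T ≤ cut S' T' := by
  unfold cut
  refine le_trans (Finset.sum_le_sum fun x _ =>
    Finset.sum_le_sum_of_subset_of_nonneg h2 (fun _ _ _ => dist_nonneg)) ?_
  exact Finset.sum_le_sum_of_subset_of_nonneg h1
    (fun _ _ _ => Finset.sum_nonneg fun _ _ => dist_nonneg)

lemma cut_union_left {V : Type*} [MetricSpace V] [DecidableEq V] {S1 S2 T : Finset V}
    (h : Disjoint S1 S2) : cut (S1 ∪ S2) T = cut S1 T + cut S2 T :=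
  Finset.sum_union h

lemma cut_union_right {V : Type*} [MetricSpace V] [DecidableEq V] {S T1 T2 : Finset V}
    (h : Disjoint T1 T2) : cut S (T1 ∪ T2) = cut S T1 + cut S T2 := by
  unfold cut
  rw [← Finset.sum_add_distrib]
  exact Finset.sum_congr rfl fun x _ => Finset.sum_union h

lemma cut_comm {V : Type*} [MetricSpace V] (S T : Finset V) : cut S T = cut T S := by
  unfold cut
  rw [Finset.sum_comm]
  simp [dist_comm]

lemma le_maxCut {V : Type*} [MetricSpace V] [DecidableEq V] {T S : Finset V}
    (hT : T ⊆ S) : cut T (S \ T) ≤ maxCut S := by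
  unfold maxCut
  exact Finset.le_sup' (fun T => cut T (S \ T)) (Finset.mem_powerset.2 hT)

lemma maxCut_le {V : Type*} [MetricSpace V] [DecidableEq V] {S : Finset V} {x : ℝ}
    (h : ∀ T ⊆ S, cut T (S \ T) ≤ x) : maxCut S ≤ x :=
  Finset.sup'_le _ _ fun T hT => h T (Finset.mem_powerset.1 hT)

lemma maxCut_mono {V : Type*} [MetricSpace V] [DecidableEq V] {S S' : Finset V}
    (h : S ⊆ S') : maxCut S ≤ maxCut S' := by
  apply maxCut_le; intro T hT
  calc cut T (S \ T) ≤ cut T (S' \ T) :=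
        cut_mono le_rfl (Finset.sdiff_subset_sdiff h le_rfl)
    _ ≤ maxCut S' := le_maxCut (hT.trans h)

theorem maxCut_union_bound {V : Type*} [MetricSpace V] [DecidableEq V]
    (A B C : Finset V) (hBA : B ⊆ A) (α : ℝ) (hα : 0 < α) (hα1 : α < 1)
    (h : cut (A \ B) (A ∪ C) ≤ α * maxCut (B ∪ C)) :
    maxCut (A ∪ C) ≤ (1 + α) * maxCut (B ∪ C) ∧
      (1 - α) * maxCut (A ∪ C) ≤ maxCut (B ∪ C) := by
  set S : Finset V := A ∪ C with hS
  set BC : Finset V := B ∪ C with hBC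
  have hBCS : BC ⊆ S := Finset.union_subset_union hBA le_rfl
  have hDAB : S \ BC ⊆ A \ B := by
    intro x hx
    simp only [hS, hBC, Finset.mem_sdiff, Finset.mem_union, not_or] at hx ⊢
    tauto
  have key : maxCut S ≤ maxCut BC + cut (A \ B) S := by
    apply maxCut_le; intro T hT
    set D : Finset V := S \ BC with hD
    have hdisj : Disjoint BC D := Finset.disjoint_sdiff
    have hTS : T = (T ∩ BC) ∪ (T ∩ D) := by
      rw [← Finset.inter_union_distrib_left, Finset.union_sdiff_of_subset hBCS,
        Finset.inter_eq_left.2 hT]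
    have hTS' : S \ T = ((S \ T) ∩ BC) ∪ ((S \ T) ∩ D) := by
      rw [← Finset.inter_union_distrib_left, Finset.union_sdiff_of_subset hBCS,
        Finset.inter_eq_left.2 Finset.sdiff_subset]
    have e1 : cut T (S \ T) = cut (T ∩ BC) ((S \ T) ∩ BC) + cut (T ∩ BC) ((S \ T) ∩ D)
        + cut (T ∩ D) (S \ T) := by
      calc cut T (S \ T) = cut (T ∩ BC) (S \ T) + cut (T ∩ D) (S \ T) := by
            rw [← cut_union_left, ← hTS]
            exact hdisj.mono Finset.inter_subset_right Finset.inter_subset_right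
        _ = _ := by
            rw [show cut (T ∩ BC) (S \ T)
                = cut (T ∩ BC) ((S \ T) ∩ BC) + cut (T ∩ BC) ((S \ T) ∩ D) by
              rw [← cut_union_right, ← hTS']
              exact hdisj.mono Finset.inter_subset_right Finset.inter_subset_right]
    have b1 : cut (T ∩ BC) ((S \ T) ∩ BC) ≤ maxCut BC := by
      refine le_trans (cut_mono le_rfl ?_) (le_maxCut Finset.inter_subset_right)
      intro x hx
      simp only [Finset.mem_inter, Finset.mem_sdiff] at hx ⊢
      exact ⟨hx.2, fun hc => hx.1.2 hc.1⟩
    have b2 : cut (T ∩ BC) ((S \ T) ∩ D) + cut (T ∩ D) (S \ T) ≤ cut (A \ B) S := by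
      have hdisj2 : Disjoint ((S \ T) ∩ D) (T ∩ D) :=
        (Finset.sdiff_disjoint).mono Finset.inter_subset_left Finset.inter_subset_left
      calc cut (T ∩ BC) ((S \ T) ∩ D) + cut (T ∩ D) (S \ T)
          = cut ((S \ T) ∩ D) (T ∩ BC) + cut (T ∩ D) (S \ T) := by rw [cut_comm]
        _ ≤ cut ((S \ T) ∩ D) S + cut (T ∩ D) S := by
            gcongr
            · exact cut_mono le_rfl ((Finset.inter_subset_left).trans hT)
            · exact cut_mono le_rfl Finset.sdiff_subset
        _ = cut (((S \ T) ∩ D) ∪ (T ∩ D)) S := (cut_union_left hdisj2).symm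
        _ ≤ cut (A \ B) S := cut_mono
            (Finset.union_subset (Finset.inter_subset_right.trans hDAB)
              (Finset.inter_subset_right.trans hDAB)) le_rfl
    linarith [e1, b1, b2]
  have hmono : maxCut BC ≤ maxCut S := maxCut_mono hBCS
  have h1 : maxCut S ≤ (1 + α) * maxCut BC := by linarith
  refine ⟨h1, ?_⟩
  nlinarith [mul_le_mul_of_nonneg_left hmono hα.le]
end

section
/- The function f(S) := MaxCut(S) + |S|·ε/n on finite subsets of a metric space with minimum nonzero distance 1 is (ε, ε/64)-smooth: for all finite B ⊆ A ⊆ V with |A| ≤ n, if (1 − ε/64)·f(A) ≤ f(B), then for every finite C ⊆ V, (1 − ε)·f(A∪C) ≤ f(B∪C). -/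
set_option maxHeartbeats 1000000

noncomputable def cutM {V : Type*} [MetricSpace V] (A B : Multiset V) : ℝ :=
  (A.map (fun x => (B.map (fun y => dist x y)).sum)).sum

noncomputable def maxCutM {V : Type*} [MetricSpace V] [DecidableEq V] (S : Multiset V) : ℝ :=
  S.powerset.toFinset.sup'
    ⟨0, Multiset.mem_toFinset.mpr (Multiset.mem_powerset.mpr (Multiset.zero_le S))⟩
    (fun T => cutM T (S - T))

section Aux
variable {V : Type*} [MetricSpace V]

lemma cutM_nonneg (X Y : Multiset V) : 0 ≤ cutM X Y := by
  apply Multiset.sum_nonneg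
  intro s hs
  obtain ⟨x, hx, rfl⟩ := Multiset.mem_map.mp hs
  apply Multiset.sum_nonneg
  intro t ht
  obtain ⟨y, hy, rfl⟩ := Multiset.mem_map.mp ht
  exact dist_nonneg

lemma cutM_add_left (X Y Z : Multiset V) : cutM (X + Y) Z = cutM X Z + cutM Y Z := by
  simp [cutM]

lemma cutM_add_right (X Y Z : Multiset V) : cutM X (Y + Z) = cutM X Y + cutM X Z := by
  simp [cutM, Multiset.sum_map_add]

lemma cutM_zero_left (Y : Multiset V) : cutM 0 Y = 0 := by simp [cutM]
lemma cutM_zero_right (X : Multiset V) : cutM X 0 = 0 := by simp [cutM]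

lemma cutM_comm (X Y : Multiset V) : cutM X Y = cutM Y X := by
  induction X using Multiset.induction_on with
  | empty => simp [cutM]
  | cons a X ih =>
    have : (a ::ₘ X) = ({a} + X : Multiset V) := by simp
    rw [this, cutM_add_left, cutM_add_right, ih]
    congr 1
    simp [cutM, dist_comm]

lemma cutM_mono_right (X : Multiset V) {Y Y' : Multiset V} (h : Y ≤ Y') :
    cutM X Y ≤ cutM X Y' := by
  obtain ⟨Z, rfl⟩ := Multiset.le_iff_exists_add.mp h
  rw [cutM_add_right]
  nlinarith [cutM_nonneg X Z]

lemma cutM_mono_left {X X' : Multiset V} (Y : Multiset V) (h : X ≤ X') :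
    cutM X Y ≤ cutM X' Y := by
  rw [cutM_comm, cutM_comm X' Y]; exact cutM_mono_right Y h

end Aux

section Aux2
variable {V : Type*} [MetricSpace V] [DecidableEq V]

lemma le_maxCutM {S T : Multiset V} (h : T ≤ S) : cutM T (S - T) ≤ maxCutM S := by
  exact Finset.le_sup' (fun T : Multiset V => cutM T (S - T))
    (Multiset.mem_toFinset.mpr (Multiset.mem_powerset.mpr h))

lemma maxCutM_exists (S : Multiset V) : ∃ T, T ≤ S ∧ maxCutM S = cutM T (S - T) := by
  obtain ⟨T, hT, hval⟩ := Finset.exists_mem_eq_sup' _ (fun T : Multiset V => cutM T (S - T))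
  exact ⟨T, Multiset.mem_powerset.mp (Multiset.mem_toFinset.mp hT), hval⟩

lemma maxCutM_nonneg (S : Multiset V) : 0 ≤ maxCutM S := by
  have := le_maxCutM (Multiset.zero_le S)
  simpa [cutM_zero_left] using this

lemma maxCutM_mono {S S' : Multiset V} (h : S ≤ S') : maxCutM S ≤ maxCutM S' := by
  obtain ⟨T, hT, hval⟩ := maxCutM_exists S
  rw [hval]
  calc cutM T (S - T) ≤ cutM T (S' - T) :=
        cutM_mono_right T (tsub_le_tsub_right h T)
    _ ≤ maxCutM S' := le_maxCutM (hT.trans h)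

lemma maxCutM_zero : maxCutM (0 : Multiset V) = 0 := by
  obtain ⟨T, hT, hval⟩ := maxCutM_exists (0 : Multiset V)
  have : T = 0 := Multiset.le_zero.mp hT
  rw [hval, this]
  simp [cutM_zero_left]

end Aux2

section Aux3
variable {V : Type*} [MetricSpace V] [DecidableEq V]

lemma maxCutM_add_le (S D : Multiset V) :
    maxCutM (S + D) ≤ maxCutM S + cutM D (S + D) := by
  obtain ⟨T, hT, hval⟩ := maxCutM_exists (S + D)
  have hT1 : T ∩ S ≤ S := Multiset.inter_le_right
  have hT2 : T - S ≤ D := by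
    rw [tsub_le_iff_right]
    rw [add_comm]
    exact hT
  obtain ⟨S1, hS1⟩ := Multiset.le_iff_exists_add.mp hT1
  obtain ⟨D1, hD1⟩ := Multiset.le_iff_exists_add.mp hT2
  have hTdecomp : T = (T - S) + (T ∩ S) := (Multiset.sub_add_inter T S).symm
  have hSD : S + D = T + (S1 + D1) := by
    calc S + D = (T ∩ S + S1) + (T - S + D1) := by rw [← hS1, ← hD1]
      _ = ((T - S) + (T ∩ S)) + (S1 + D1) := by ac_rfl
      _ = T + (S1 + D1) := by rw [← hTdecomp]
  have hsub : (S + D) - T = S1 + D1 := by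
    have := add_tsub_cancel_left T (S1 + D1)
    rwa [← hSD] at this
  have hsubS : S - (T ∩ S) = S1 := by
    have := add_tsub_cancel_left (T ∩ S) S1
    rwa [← hS1] at this
  rw [hval, hsub, hTdecomp, cutM_add_left, cutM_add_right, cutM_add_right]
  have h1 : cutM (T ∩ S) S1 ≤ maxCutM S := by
    have := le_maxCutM hT1
    rwa [hsubS] at this
  have h2 : cutM (T - S) S1 + cutM (T - S) D1 ≤ cutM (T - S) (S + D) := by
    rw [← cutM_add_right]
    apply cutM_mono_right
    rw [hSD]
    exact Multiset.le_add_left _ _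
  have h3 : cutM (T ∩ S) D1 ≤ cutM D1 (S + D) := by
    rw [cutM_comm]
    apply cutM_mono_right
    calc T ∩ S ≤ T := Multiset.inter_le_left
      _ ≤ S + D := hT
  have h4 : cutM (T - S) (S + D) + cutM D1 (S + D) = cutM D (S + D) := by
    rw [← cutM_add_left, ← hD1]
  linarith

lemma le_maxCutM_add (S D : Multiset V) :
    maxCutM S + (1/2) * cutM D S ≤ maxCutM (S + D) := by
  obtain ⟨T, hT, hval⟩ := maxCutM_exists S
  obtain ⟨S1, hS1⟩ := Multiset.le_iff_exists_add.mp hT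
  have hsubS : S - T = S1 := by
    have := add_tsub_cancel_left T S1
    rwa [← hS1] at this
  have e1 : S + D = T + (S1 + D) := by rw [hS1, add_assoc]
  have e2 : S + D = (T + D) + S1 := by rw [hS1]; ac_rfl
  have c1 : cutM T (S1 + D) ≤ maxCutM (S + D) := by
    have h := le_maxCutM (show T ≤ S + D from hT.trans (Multiset.le_add_right S D))
    have : (S + D) - T = S1 + D := by
      have := add_tsub_cancel_left T (S1 + D)
      rwa [← e1] at this
    rwa [this] at h
  have c2 : cutM (T + D) S1 ≤ maxCutM (S + D) := by
    have hle : T + D ≤ S + D := by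
      rw [e2]; exact Multiset.le_add_right _ _
    have h := le_maxCutM hle
    have : (S + D) - (T + D) = S1 := by
      have := add_tsub_cancel_left (T + D) S1
      rwa [← e2] at this
    rwa [this] at h
  rw [cutM_add_right] at c1
  rw [cutM_add_left] at c2
  have hDS : cutM D S = cutM D T + cutM D S1 := by
    rw [hS1, cutM_add_right]
  have hcomm : cutM T D = cutM D T := cutM_comm T D
  rw [hval, hsubS]
  linarith

lemma maxCutM_le_half (S : Multiset V) : 2 * maxCutM S ≤ cutM S S := by
  obtain ⟨T, hT, hval⟩ := maxCutM_exists S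
  obtain ⟨S1, hS1⟩ := Multiset.le_iff_exists_add.mp hT
  have hsubS : S - T = S1 := by
    have := add_tsub_cancel_left T S1
    rwa [← hS1] at this
  have : cutM S S = cutM T T + cutM T S1 + (cutM S1 T + cutM S1 S1) := by
    rw [hS1, cutM_add_left, cutM_add_right, cutM_add_right]
  rw [hval, hsubS, this, cutM_comm S1 T]
  nlinarith [cutM_nonneg T T, cutM_nonneg S1 S1]

end Aux3

section Aux4
variable {V : Type*} [MetricSpace V]

noncomputable def exM (x : V) (S : Multiset V) : ℝ := (S.map (dist x)).sum

lemma exM_nonneg (x : V) (S : Multiset V) : 0 ≤ exM x S :=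
  Multiset.sum_nonneg (by
    intro t ht
    obtain ⟨y, hy, rfl⟩ := Multiset.mem_map.mp ht
    exact dist_nonneg)

lemma cutM_eq_sum_exM (X Y : Multiset V) :
    cutM X Y = (X.map (fun x => exM x Y)).sum := rfl

lemma cutM_eq_sum_exM' (X Y : Multiset V) :
    cutM X Y = (Y.map (fun y => exM y X)).sum := by
  rw [cutM_comm]; rfl

lemma sum_const_real (X : Multiset V) (c : ℝ) :
    (X.map (fun _ => c)).sum = (X.card : ℝ) * c := by
  simp [Multiset.map_const', Multiset.sum_replicate, nsmul_eq_mul]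

lemma dist_le_exM {x y : V} {S : Multiset V} (hy : y ∈ S) : dist x y ≤ exM x S := by
  apply Multiset.single_le_sum
  · intro t ht
    obtain ⟨z, hz, rfl⟩ := Multiset.mem_map.mp ht
    exact dist_nonneg
  · exact Multiset.mem_map_of_mem _ hy

lemma pointwise_avg (B : Multiset V) (x y : V) :
    (B.card : ℝ) * dist x y ≤ exM x B + exM y B := by
  have h1 : (B.map (fun _ => dist x y)).sum ≤ (B.map (fun β => dist x β + dist y β)).sum := by
    apply Multiset.sum_map_le_sum_map
    intro β hβ
    calc dist x y ≤ dist x β + dist β y := dist_triangle x β y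
      _ = dist x β + dist y β := by rw [dist_comm β y]
  rw [sum_const_real] at h1
  rwa [Multiset.sum_map_add] at h1

lemma exM_avg (B Y : Multiset V) (x : V) :
    (B.card : ℝ) * exM x Y ≤ (Y.card : ℝ) * exM x B + cutM Y B := by
  have h1 : (Y.map (fun y => (B.card : ℝ) * dist x y)).sum ≤
      (Y.map (fun y => exM x B + exM y B)).sum := by
    apply Multiset.sum_map_le_sum_map
    intro y hy
    exact pointwise_avg B x y
  rw [Multiset.sum_map_mul_left] at h1
  rw [Multiset.sum_map_add, sum_const_real] at h1
  rw [← cutM_eq_sum_exM'] at h1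
  rw [cutM_comm Y B]
  exact h1

lemma cutM_avg (B X Y : Multiset V) :
    (B.card : ℝ) * cutM X Y ≤ (Y.card : ℝ) * cutM X B + (X.card : ℝ) * cutM B Y := by
  have h1 : (X.map (fun x => (B.card : ℝ) * exM x Y)).sum ≤
      (X.map (fun x => (Y.card : ℝ) * exM x B + cutM Y B)).sum := by
    apply Multiset.sum_map_le_sum_map
    intro x hx
    exact exM_avg B Y x
  rw [Multiset.sum_map_mul_left] at h1
  rw [Multiset.sum_map_add, Multiset.sum_map_mul_left, sum_const_real] at h1
  rw [← cutM_eq_sum_exM, ← cutM_eq_sum_exM] at h1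
  rwa [cutM_comm Y B] at h1

lemma cutM_eq_zero {X Y : Multiset V} (h : ∀ x ∈ X, ∀ y ∈ Y, dist x y = 0) :
    cutM X Y = 0 := by
  apply Multiset.sum_eq_zero
  intro t ht
  obtain ⟨x, hx, rfl⟩ := Multiset.mem_map.mp ht
  apply Multiset.sum_eq_zero
  intro u hu
  obtain ⟨y, hy, rfl⟩ := Multiset.mem_map.mp hu
  exact h x hx y hy

end Aux4

section Aux5
variable {V : Type*} [MetricSpace V] [DecidableEq V]

lemma dist_eq_zero_of_maxCutM_eq_zero {S : Multiset V} (h : maxCutM S = 0)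
    {x y : V} (hx : x ∈ S) (hy : y ∈ S) : dist x y = 0 := by
  by_contra hne
  have hxy : x ≠ y := by
    intro he; subst he; simp at hne
  have hxle : {x} ≤ S := Multiset.singleton_le.mpr hx
  have hyS : y ∈ S - {x} := by
    rw [Multiset.mem_sub]
    have h1 : 1 ≤ Multiset.count y S := Multiset.one_le_count_iff_mem.mpr hy
    have h2 : Multiset.count y ({x} : Multiset V) = 0 := by
      simp [Multiset.count_singleton, hxy.symm]
    omega
  have hd : dist x y ≤ cutM {x} (S - {x}) := by
    have : cutM {x} (S - {x}) = exM x (S - {x}) := by simp [cutM, exM]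
    rw [this]
    exact dist_le_exM hyS
  have := le_maxCutM hxle
  have hnn := dist_nonneg (x := x) (y := y)
  rw [h] at this
  have : dist x y = 0 := le_antisymm (hd.trans this) hnn
  exact hne this

lemma one_le_maxCutM_of_pos {S : Multiset V}
    (hmin : ∀ x y : V, dist x y ≠ 0 → 1 ≤ dist x y)
    (h : 0 < maxCutM S) : 1 ≤ maxCutM S := by
  obtain ⟨T, hT, hval⟩ := maxCutM_exists S
  rw [hval] at h ⊢
  -- cutM T (S - T) > 0, so some pair has positive distance
  have : ∃ x ∈ T, ∃ y ∈ S - T, dist x y ≠ 0 := by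
    by_contra hc
    push_neg at hc
    have : cutM T (S - T) = 0 := cutM_eq_zero (by
      intro x hx y hy
      exact hc x hx y hy)
    rw [this] at h
    exact lt_irrefl _ h
  obtain ⟨x, hx, y, hy, hne⟩ := this
  have h1 : 1 ≤ dist x y := hmin x y hne
  calc (1:ℝ) ≤ dist x y := h1
    _ ≤ exM x (S - T) := dist_le_exM hy
    _ ≤ cutM T (S - T) := by
        rw [cutM_eq_sum_exM]
        apply Multiset.single_le_sum
        · intro t ht
          obtain ⟨z, hz, rfl⟩ := Multiset.mem_map.mp ht
          exact exM_nonneg z _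
        · exact Multiset.mem_map_of_mem _ hx

end Aux5
theorem maxCut_smooth {V : Type*} [MetricSpace V] [DecidableEq V]
    (hmin : ∀ x y : V, dist x y ≠ 0 → 1 ≤ dist x y)
    (n : ℕ) (hn : 1 ≤ n) (ε : ℝ) (hε : 0 < ε) (hε' : ε < 1 / 4)
    (A B : Multiset V) (hBA : B ≤ A) (hA : A.card ≤ n)
    (h : (1 - ε / 64) * (maxCutM A + (A.card : ℝ) * ε / (n : ℝ)) ≤
          maxCutM B + (B.card : ℝ) * ε / (n : ℝ)) :
    ∀ C : Multiset V,
      (1 - ε) * (maxCutM (A + C) + ((A + C).card : ℝ) * ε / (n : ℝ)) ≤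
        maxCutM (B + C) + ((B + C).card : ℝ) * ε / (n : ℝ) := by
  intro C
  have hn1 : (1:ℝ) ≤ (n:ℝ) := by exact_mod_cast hn
  have hn0 : (0:ℝ) < (n:ℝ) := by linarith
  set η : ℝ := ε / (n:ℝ) with hηdef
  have hη : 0 < η := by positivity
  have hdiv : ∀ m : Multiset V, ((m.card : ℝ)) * ε / (n:ℝ) = (m.card : ℝ) * η := by
    intro m; rw [hηdef, mul_div_assoc]
  rw [hdiv, hdiv]
  rw [hdiv, hdiv] at h
  have hAeq : B + (A - B) = A := add_tsub_cancel_of_le hBA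
  set D : Multiset V := A - B with hDdef
  set a : ℝ := (Multiset.card A : ℝ) with hadef
  set b : ℝ := (Multiset.card B : ℝ) with hbdef
  set c : ℝ := (Multiset.card C : ℝ) with hcdef
  set d : ℝ := (Multiset.card D : ℝ) with hddef
  have habd : a = b + d := by
    rw [hadef, hbdef, hddef, ← hAeq]
    push_cast [Multiset.card_add]
    ring
  have ha0 : 0 ≤ a := by rw [hadef]; positivity
  have hb0 : 0 ≤ b := by rw [hbdef]; positivity
  have hc0 : 0 ≤ c := by rw [hcdef]; positivity
  have hd0 : 0 ≤ d := by rw [hddef]; positivity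
  have han : a ≤ (n:ℝ) := by rw [hadef]; exact_mod_cast hA
  have hba : b ≤ a := by
    rw [hbdef, hadef]
    exact_mod_cast Multiset.card_le_card hBA
  have hcardAC : ((A + C).card : ℝ) = a + c := by push_cast [Multiset.card_add]; rfl
  have hcardBC : ((B + C).card : ℝ) = b + c := by push_cast [Multiset.card_add]; rfl
  rw [hcardAC, hcardBC]
  set MA : ℝ := maxCutM A with hMAdef
  set MB : ℝ := maxCutM B with hMBdef
  set M : ℝ := maxCutM (A + C) with hMdef
  set M' : ℝ := maxCutM (B + C) with hM'def
  set eDB : ℝ := cutM D B with heDBdef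
  set eDC : ℝ := cutM D C with heDCdef
  set eDD : ℝ := cutM D D with heDDdef
  set eBC : ℝ := cutM B C with heBCdef
  have heDB0 : 0 ≤ eDB := cutM_nonneg D B
  have heDC0 : 0 ≤ eDC := cutM_nonneg D C
  have heDD0 : 0 ≤ eDD := cutM_nonneg D D
  have heBC0 : 0 ≤ eBC := cutM_nonneg B C
  have hMB0 : 0 ≤ MB := maxCutM_nonneg B
  have hM'0 : 0 ≤ M' := maxCutM_nonneg (B + C)
  have hMA0 : 0 ≤ MA := maxCutM_nonneg A
  have hM0 : 0 ≤ M := maxCutM_nonneg (A + C)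
  have h1 : MB + (1/2) * eDB ≤ MA := by
    have := le_maxCutM_add B D
    rwa [hAeq] at this
  have hMAM : MA ≤ M := maxCutM_mono (Multiset.le_add_right A C)
  have hM'M : M' ≤ M := maxCutM_mono (add_le_add_left hBA C)
  have hBCM' : eBC ≤ M' := by
    have hle : B ≤ B + C := Multiset.le_add_right B C
    have := le_maxCutM hle
    rwa [add_tsub_cancel_left] at this
  have h4 : M ≤ M' + (eDB + eDC + eDD) := by
    have hsplit : A + C = (B + C) + D := by
      rw [← hAeq]; ac_rfl
    have hmle := maxCutM_add_le (B + C) D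
    rw [← hsplit] at hmle
    have hcut : cutM D (A + C) = eDB + eDC + eDD := by
      rw [show A + C = (B + C) + D from hsplit]
      rw [cutM_add_right, cutM_add_right]
    rw [hcut] at hmle
    exact hmle
  -- products needed for linear reasoning
  have haux : a * η = b * η + d * η := by rw [habd]; ring
  have hdη0 : 0 ≤ d * η := mul_nonneg hd0 hη.le
  have haη0 : 0 ≤ a * η := mul_nonneg ha0 hη.le
  have hacη0 : 0 ≤ (a + c) * η := mul_nonneg (by linarith) hη.le
  have hcη0 : 0 ≤ c * η := mul_nonneg hc0 hη.le
  have h3 : (1/2) * eDB + d * η ≤ (ε/64) * (MA + a * η) := by linarith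
  have hdη : d * η ≤ (ε/64) * (MA + a * η) := by linarith
  have hEDB2 : eDB ≤ 2 * (ε/64) * (MA + a * η) := by linarith
  set fA : ℝ := MA + a * η with hfAdef
  set F : ℝ := M + (a + c) * η with hFdef
  have hfA0 : 0 ≤ fA := by rw [hfAdef]; linarith
  have hF0 : 0 ≤ F := by rw [hFdef]; linarith
  have hfAF : fA ≤ F := by rw [hfAdef, hFdef]; linarith
  have hεF0 : 0 ≤ ε * F := mul_nonneg hε.le hF0
  have hsuff : (M - M') + d * η ≤ ε * F → (1 - ε) * (M + (a + c) * η) ≤ M' + (b + c) * η := by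
    intro hx
    have hεF : ε * F = ε * (M + (a + c) * η) := by rw [hFdef]
    linarith [hx, haux, hεF]
  apply hsuff
  have hδF : d * η ≤ (ε/64) * F := by
    have : (ε/64) * fA ≤ (ε/64) * F := mul_le_mul_of_nonneg_left hfAF (by positivity)
    rw [hfAdef] at this
    linarith
  clear_value D a b c d MA MB M M' eDB eDC eDD eBC fA F η
  by_cases hA0 : A = 0
  · have hB0 : B = 0 := Multiset.le_zero.mp (hA0 ▸ hBA)
    have hMM' : M = M' := by rw [hMdef, hM'def, hA0, hB0]
    have hD0 : D = (0 : Multiset V) := by rw [hDdef, hA0, hB0]; simp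
    have hd00 : d = 0 := by rw [hddef, hD0]; simp
    rw [hMM', hd00]
    linarith
  have ha1 : (1:ℝ) ≤ a := by
    have h1' : A.card ≠ 0 := fun hc0' => hA0 (Multiset.card_eq_zero.mp hc0')
    have : 1 ≤ A.card := Nat.one_le_iff_ne_zero.mpr h1'
    rw [hadef]; exact_mod_cast this
  have hb1 : (1:ℝ) ≤ b := by
    by_contra hb
    push_neg at hb
    have hbz : Multiset.card B = 0 := by
      by_contra hbz
      have h2' : 1 ≤ Multiset.card B := Nat.one_le_iff_ne_zero.mpr hbz
      have : (1:ℝ) ≤ b := by rw [hbdef]; exact_mod_cast h2'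
      linarith
    have hBz : B = 0 := Multiset.card_eq_zero.mp hbz
    have hMBz : MB = 0 := by rw [hMBdef, hBz]; exact maxCutM_zero
    have hbR : b = 0 := by rw [hbdef, hbz]; simp
    rw [hMBz, hbR] at h
    have hηa : η ≤ a * η := by
      have := mul_nonneg (sub_nonneg.mpr ha1) hη.le
      linarith [this]
    have hP : 0 < fA := by rw [hfAdef]; linarith
    have := mul_pos (show (0:ℝ) < 1 - ε/64 by linarith) hP
    linarith
  have hbpos : (0:ℝ) < b := by linarith
  -- averaging inequalities
  have havg1 : b * eDD ≤ 2 * d * eDB := by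
    have hav := cutM_avg B D D
    rw [cutM_comm B D] at hav
    rw [hbdef, hddef, heDDdef, heDBdef]
    linarith [hav]
  have havg2 : b * eDC ≤ c * eDB + d * eBC := by
    have hav := cutM_avg B D C
    rw [hbdef, hcdef, hddef, heDCdef, heDBdef, heBCdef]
    linarith [hav]
  have havg3 : d * cutM B B ≤ 2 * b * eDB := by
    have hav := cutM_avg D B B
    rw [cutM_comm B D] at hav
    rw [hbdef, hddef, heDBdef]
    linarith [hav]
  have havg4 : c * cutM B B ≤ 2 * b * eBC := by
    have hav := cutM_avg C B B
    rw [cutM_comm C B] at hav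
    rw [hbdef, hcdef, heBCdef]
    linarith [hav]
  have hhalfB : 2 * MB ≤ cutM B B := by
    have := maxCutM_le_half B
    rwa [← hMBdef] at this
  have hM'F : M' ≤ F := by rw [hFdef]; linarith
  have hBCF : eBC ≤ F := by linarith
  by_cases hMA : MA = 0
  · -- all distances within A are zero
    have hzero : ∀ x ∈ A, ∀ y ∈ A, dist x y = 0 := by
      intro x hx y hy
      exact dist_eq_zero_of_maxCutM_eq_zero (hMAdef ▸ hMA) hx hy
    have hDA : D ≤ A := by rw [hDdef]; exact tsub_le_self
    have heDBz : eDB = 0 := by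
      rw [heDBdef]
      exact cutM_eq_zero fun x hx y hy =>
        hzero x (Multiset.mem_of_le hDA hx) y (Multiset.mem_of_le hBA hy)
    have heDDz : eDD = 0 := by
      rw [heDDdef]
      exact cutM_eq_zero fun x hx y hy =>
        hzero x (Multiset.mem_of_le hDA hx) y (Multiset.mem_of_le hDA hy)
    have hda : d ≤ (ε/64) * (b + d) := by
      have hfAz : fA = a * η := by rw [hfAdef, hMA]; ring
      rw [hfAz] at h3
      have h5 : d * η ≤ ((ε/64) * (b + d)) * η := by
        rw [← habd]
        linarith [h3, heDB0]
      exact le_of_mul_le_mul_right h5 hη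
    have hdb : d ≤ 2 * (ε/64) * b := by
      have hint : 0 ≤ d * (1/2 - ε/64) := mul_nonneg hd0 (by linarith)
      linarith [hda, hint]
    have hDC : eDC ≤ 2 * (ε/64) * eBC := by
      have p1 : d * eBC ≤ (2 * (ε/64) * b) * eBC := mul_le_mul_of_nonneg_right hdb heBC0
      have p2 : b * eDC ≤ b * (2 * (ε/64) * eBC) := by
        have := havg2
        rw [heDBz] at this
        linarith [this, p1]
      exact le_of_mul_le_mul_left p2 hbpos
    have q1 : 2 * (ε/64) * eBC ≤ 2 * (ε/64) * M' := by
      apply mul_le_mul_of_nonneg_left hBCM' (by positivity)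
    have q2 : 2 * (ε/64) * M' ≤ 2 * (ε/64) * F := by
      apply mul_le_mul_of_nonneg_left hM'F (by positivity)
    have hMM'b : M - M' ≤ 2 * (ε/64) * F := by linarith [h4, heDBz, heDDz, hDC, q1, q2]
    linarith only [hδF, hMM'b, hεF0]
  · -- MA ≥ 1
    have hMA1 : 1 ≤ MA := by
      rw [hMAdef]
      apply one_le_maxCutM_of_pos hmin
      rw [← hMAdef]
      exact lt_of_le_of_ne hMA0 (Ne.symm hMA)
    have hfA1 : 1 ≤ fA := by rw [hfAdef]; linarith
    have hbη : b * η ≤ ε := by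
      have p1 : b * η ≤ (n:ℝ) * η := mul_le_mul_of_nonneg_right (le_trans hba han) hη.le
      have p2 : (n:ℝ) * η = ε := by
        rw [hηdef]
        field_simp
      linarith
    have hMBfA : fA ≤ 2 * MB := by
      have p1 : ε ≤ ε * fA := by
        have := mul_nonneg (sub_nonneg.mpr hfA1) hε.le
        linarith [this]
      have p2 : 0 ≤ fA * (1/2 - ε/64 - ε) := mul_nonneg hfA0 (by linarith)
      linarith [p1, p2, h, hbη]
    have hEDB2' : eDB ≤ 2 * (ε/64) * fA := hEDB2
    have hd4 : d ≤ 4 * (ε/64) * b := by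
      have k1 : d * (2 * MB) ≤ d * cutM B B := mul_le_mul_of_nonneg_left hhalfB hd0
      have k2 : d * fA ≤ d * (2 * MB) := mul_le_mul_of_nonneg_left hMBfA hd0
      have k3 : (2 * b) * eDB ≤ (2 * b) * (2 * (ε/64) * fA) :=
        mul_le_mul_of_nonneg_left hEDB2' (by linarith)
      have k4 : d * fA ≤ 4 * (ε/64) * b * fA := by linarith only [k1, k2, k3, havg3]
      by_contra hcon
      push_neg at hcon
      have k5 : (d - 4 * (ε/64) * b) * 1 ≤ (d - 4 * (ε/64) * b) * fA :=
        mul_le_mul_of_nonneg_left hfA1 (by linarith)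
      linarith [k4, k5]
    have hcfA : c * fA ≤ 2 * b * eBC := by
      have k1 : c * fA ≤ c * (2 * MB) := mul_le_mul_of_nonneg_left hMBfA hc0
      have k2 : c * (2 * MB) ≤ c * cutM B B := by
        have := mul_le_mul_of_nonneg_left hhalfB hc0
        linarith [this]
      linarith [k1, k2, havg4]
    have hfAF' : 2 * (ε/64) * fA ≤ 2 * (ε/64) * F :=
      mul_le_mul_of_nonneg_left hfAF (by positivity)
    have heDBF : eDB ≤ 2 * (ε/64) * F := by linarith [hEDB2', hfAF']
    have t1 : b * eDB ≤ 2 * (ε/64) * b * F := by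
      have := mul_le_mul_of_nonneg_left heDBF hb0
      linarith [this]
    have t2 : b * eDD ≤ (ε/64) * b * F := by
      have q1 : d * eDB ≤ (4 * (ε/64) * b) * eDB := mul_le_mul_of_nonneg_right hd4 heDB0
      have q2 : (4 * (ε/64) * b) * eDB ≤ (4 * (ε/64) * b) * (2 * (ε/64) * F) :=
        mul_le_mul_of_nonneg_left heDBF (by positivity)
      have q3 : 0 ≤ (ε/64) * (b * F) * (1 - 16 * (ε/64)) :=
        mul_nonneg (mul_nonneg (by positivity) (mul_nonneg hb0 hF0)) (by linarith)
      linarith [havg1, q1, q2, q3]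
    have t3 : b * eDC ≤ 8 * (ε/64) * b * F := by
      have u1 : c * eDB ≤ c * (2 * (ε/64) * fA) := mul_le_mul_of_nonneg_left hEDB2' hc0
      have u2 : 2 * (ε/64) * (c * fA) ≤ 2 * (ε/64) * (2 * b * eBC) :=
        mul_le_mul_of_nonneg_left hcfA (by positivity)
      have u3 : d * eBC ≤ (4 * (ε/64) * b) * eBC := mul_le_mul_of_nonneg_right hd4 heBC0
      have u4 : (8 * (ε/64) * b) * eBC ≤ (8 * (ε/64) * b) * F :=
        mul_le_mul_of_nonneg_left hBCF (by positivity)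
      linarith [havg2, u1, u2, u3, u4]
    have hMM'b : M - M' ≤ 11 * (ε/64) * F := by
      have w1 : b * M ≤ b * (M' + (eDB + eDC + eDD)) := mul_le_mul_of_nonneg_left h4 hb0
      have w2 : b * (M - M') ≤ b * (11 * (ε/64) * F) := by linarith only [w1, t1, t2, t3]
      exact le_of_mul_le_mul_left w2 hbpos
    linarith only [hδF, hMM'b, hεF0]
end

section
/- The plain Max-Cut function is not smooth: there exist a metric space (V, dist), finite sets B ⊆ A ⊆ V and C ⊆ V such that MaxCut(A) = MaxCut(B) = 0 (so (1−β)·MaxCut(A) ≤ MaxCut(B) for every β ∈ (0,1)), yet MaxCut(A∪C) > 0 = MaxCut(B∪C); concretely one may take V = ℝ with multisets A = {1,1}, B = {0}, C = {0}. -/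
lemma cutM_zero_of_const {S T : Multiset ℝ} (c : ℝ) (hS : ∀ x ∈ S, x = c)
    (hT : T ≤ S) : cutM T (S - T) = 0 := by
  unfold cutM
  apply Multiset.sum_eq_zero
  intro v hv
  simp only [Multiset.mem_map] at hv
  obtain ⟨x, hx, rfl⟩ := hv
  apply Multiset.sum_eq_zero
  intro w hw
  simp only [Multiset.mem_map] at hw
  obtain ⟨y, hy, rfl⟩ := hw
  have hx' : x = c := hS x (Multiset.mem_of_le hT hx)
  have hy' : y = c := hS y (Multiset.mem_of_le (Multiset.sub_le_self S T) hy)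
  simp [hx', hy']

lemma maxCutM_const_zero (S : Multiset ℝ) (c : ℝ) (hS : ∀ x ∈ S, x = c) :
    maxCutM S = 0 := by
  unfold maxCutM
  apply le_antisymm
  · apply Finset.sup'_le
    intro T hT
    rw [Multiset.mem_toFinset, Multiset.mem_powerset] at hT
    exact le_of_eq (cutM_zero_of_const c hS hT)
  · refine le_trans (le_of_eq ?_) (Finset.le_sup' _ (Multiset.mem_toFinset.mpr (Multiset.mem_powerset.mpr (Multiset.zero_le S))))
    exact (cutM_zero_of_const c hS (Multiset.zero_le S)).symm

theorem maxCut_not_smooth :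
    maxCutM ({1, 1} : Multiset ℝ) = 0 ∧
    maxCutM ({0} : Multiset ℝ) = 0 ∧
    (∀ β : ℝ, 0 < β → β < 1 →
      (1 - β) * maxCutM ({1, 1} : Multiset ℝ) ≤ maxCutM ({0} : Multiset ℝ)) ∧
    0 < maxCutM (({1, 1} : Multiset ℝ) + {0}) ∧
    maxCutM (({0} : Multiset ℝ) + {0}) = 0 := by
  have h11 : maxCutM ({1, 1} : Multiset ℝ) = 0 := by
    apply maxCutM_const_zero _ 1
    intro x hx
    simp only [Multiset.insert_eq_cons, Multiset.mem_cons, Multiset.mem_singleton] at hx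
    rcases hx with h | h <;> exact h
  have h0 : maxCutM ({0} : Multiset ℝ) = 0 := by
    apply maxCutM_const_zero _ 0
    intro x hx
    simpa using hx
  refine ⟨h11, h0, ?_, ?_, ?_⟩
  · intro β _ _; rw [h11, h0, mul_zero]
  · have hle : ({0} : Multiset ℝ) ≤ ({1, 1} : Multiset ℝ) + {0} :=
      Multiset.le_add_left _ _
    have hmem : ({0} : Multiset ℝ) ∈ ((({1, 1} : Multiset ℝ) + {0}).powerset).toFinset :=
      Multiset.mem_toFinset.mpr (Multiset.mem_powerset.mpr hle)
    have key : cutM ({0} : Multiset ℝ) ((({1, 1} : Multiset ℝ) + {0}) - {0}) = 2 := by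
      have : (({1, 1} : Multiset ℝ) + {0}) - {0} = {1, 1} := by simp
      rw [this]
      simp [cutM, Real.dist_eq]
      norm_num
    have := Finset.le_sup' (fun T => cutM T ((({1, 1} : Multiset ℝ) + {0}) - T)) hmem
    unfold maxCutM
    calc (0:ℝ) < 2 := by norm_num
      _ = cutM ({0} : Multiset ℝ) ((({1, 1} : Multiset ℝ) + {0}) - {0}) := key.symm
      _ ≤ _ := this
  · apply maxCutM_const_zero _ 0
    intro x hx
    simpa using hx
end

section
/- Let q(x) := Σ_{y∈P} dist(x,y) for a finite multiset P in a metric space, and Q := Σ_{x∈P} q(x). If a sampling procedure selects point p_t with probability β_t · Π_{i=t+1}^n (1 − β_i) where β_t ≥ (c/K)·q'(p_t)/Q_t for the prefix quantities q'(p_t) = Σ_{i≤t} dist(p_t,p_i), Q_t = Σ_{i,j≤t} dist(p_i,p_j), and Σ_{i=t+1}^n β_i ≤ 1/2, then Pr[select p_t] ≥ (c/(2K)) · q'(p_t)/Q_t, and hence (using 2R_t/Q_t ≥ q(p_t)/Q when Q_t > 0) Pr[select p_t] ≥ (c/(4K)) · q(p_t)/Q. -/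
open Finset

lemma weierstrass (s : Finset ℕ) (β : ℕ → ℝ) (h : ∀ i, 0 ≤ β i ∧ β i ≤ 1) :
    1 - ∑ i ∈ s, β i ≤ ∏ i ∈ s, (1 - β i) := by
  induction s using Finset.cons_induction with
  | empty => simp
  | cons a s ha ih =>
    rw [Finset.prod_cons, Finset.sum_cons]
    have h1 : 0 ≤ 1 - β a := by linarith [(h a).2]
    have h2 : 0 ≤ ∑ i ∈ s, β i := Finset.sum_nonneg fun i _ => (h i).1
    nlinarith [(h a).1]

lemma sum_split (f : ℕ → ℝ) {t n : ℕ} (htn : t ≤ n) :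
    ∑ i ∈ Finset.Icc 1 n, f i
      = ∑ i ∈ Finset.Icc 1 t, f i + ∑ i ∈ Finset.Icc (t+1) n, f i := by
  have h1 : Finset.Icc 1 n = Finset.Ioc 0 n := by rw [← Finset.Icc_add_one_left_eq_Ioc]; rfl
  have h2 : Finset.Icc 1 t = Finset.Ioc 0 t := by rw [← Finset.Icc_add_one_left_eq_Ioc]; rfl
  have h3 : Finset.Icc (t+1) n = Finset.Ioc t n := by rw [← Finset.Icc_add_one_left_eq_Ioc]
  rw [h1, h2, h3, ← Finset.sum_Ioc_consecutive f (Nat.zero_le t) htn]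

lemma Qpre_le {V : Type*} [MetricSpace V] (p : ℕ → V) (t : ℕ) (x : V) :
    Qpre p t ≤ 2 * t * ∑ j ∈ Finset.Icc 1 t, dist x (p j) := by
  have hcard : (Finset.Icc 1 t).card = t := by simp
  have : Qpre p t ≤ ∑ i ∈ Finset.Icc 1 t, ∑ j ∈ Finset.Icc 1 t, (dist x (p i) + dist x (p j)) := by
    apply Finset.sum_le_sum; intro i _; apply Finset.sum_le_sum; intro j _
    calc dist (p i) (p j) ≤ dist (p i) x + dist x (p j) := dist_triangle _ _ _
      _ = dist x (p i) + dist x (p j) := by rw [dist_comm (p i) x]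
  refine this.trans_eq ?_
  have e1 : ∀ i, ∑ j ∈ Finset.Icc 1 t, (dist x (p i) + dist x (p j))
      = (t : ℝ) * dist x (p i) + ∑ j ∈ Finset.Icc 1 t, dist x (p j) := by
    intro i; rw [Finset.sum_add_distrib, Finset.sum_const, hcard, nsmul_eq_mul]
  simp only [e1]
  rw [Finset.sum_add_distrib, Finset.sum_const, hcard, nsmul_eq_mul, ← Finset.mul_sum]
  ring

lemma key_pointwise {V : Type*} [MetricSpace V] (p : ℕ → V) (t : ℕ) (ht : 1 ≤ t) (i : ℕ) :
    dist (p t) (p i) * Qpre p t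
      ≤ 4 * Rpre p t * ∑ j ∈ Finset.Icc 1 t, dist (p i) (p j) := by
  set r := dist (p t) (p i) with hr
  set c := ∑ j ∈ Finset.Icc 1 t, dist (p i) (p j) with hc
  set R := Rpre p t with hR
  set Q := Qpre p t with hQ
  have hr0 : 0 ≤ r := dist_nonneg
  have hc0 : 0 ≤ c := Finset.sum_nonneg fun j _ => dist_nonneg
  have hR0 : 0 ≤ R := Finset.sum_nonneg fun j _ => dist_nonneg
  have hQ0 : 0 ≤ Q := Finset.sum_nonneg fun a _ => Finset.sum_nonneg fun b _ => dist_nonneg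
  have hQc : Q ≤ 2 * t * c := Qpre_le p t (p i)
  have hQR : Q ≤ 2 * t * R := by
    have := Qpre_le p t (p t); rw [hQ, hR]; simpa [Rpre] using this
  have hcR : (t : ℝ) * r - R ≤ c := by
    have hcard : (Finset.Icc 1 t).card = t := by simp
    have : ∑ j ∈ Finset.Icc 1 t, (dist (p t) (p i) - dist (p t) (p j))
        ≤ ∑ j ∈ Finset.Icc 1 t, dist (p i) (p j) := by
      apply Finset.sum_le_sum; intro j _
      have h2 := dist_triangle (p t) (p j) (p i)
      rw [dist_comm (p j) (p i)] at h2
      linarith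
    rw [hr, hc, hR]; simpa [Finset.sum_sub_distrib, Finset.sum_const, hcard, Rpre] using this
  have ht1 : (1 : ℝ) ≤ t := by exact_mod_cast ht
  rcases le_or_gt ((t : ℝ) * r) (2 * R) with h | h
  · calc r * Q ≤ r * (2 * t * c) := by nlinarith
      _ ≤ 4 * R * c := by nlinarith
  · calc r * Q ≤ r * (2 * t * R) := by nlinarith
      _ ≤ 4 * R * c := by nlinarith

lemma prefix_ratio {V : Type*} [MetricSpace V] (p : ℕ → V) (n t : ℕ)
    (ht : 1 ≤ t) (htn : t ≤ n) :
    (∑ i ∈ Finset.Icc 1 n, dist (p t) (p i)) * Qpre p t ≤ 2 * Rpre p t * Qpre p n := by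
  set A := ∑ i ∈ Finset.Icc (t+1) n, ∑ j ∈ Finset.Icc 1 t, dist (p i) (p j) with hA
  have hA0 : 0 ≤ A := Finset.sum_nonneg fun a _ => Finset.sum_nonneg fun b _ => dist_nonneg
  have hR0 : 0 ≤ Rpre p t := Finset.sum_nonneg fun j _ => dist_nonneg
  have hQ0 : 0 ≤ Qpre p t := Finset.sum_nonneg fun a _ => Finset.sum_nonneg fun b _ => dist_nonneg
  -- Qn ≥ Qt + 2A
  have hQn : Qpre p t + 2 * A ≤ Qpre p n := by
    have hsplit : Qpre p n
        = ∑ i ∈ Finset.Icc 1 t, ∑ j ∈ Finset.Icc 1 n, dist (p i) (p j)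
        + ∑ i ∈ Finset.Icc (t+1) n, ∑ j ∈ Finset.Icc 1 n, dist (p i) (p j) := by
      exact sum_split _ htn
    have h1 : ∀ i, ∑ j ∈ Finset.Icc 1 n, dist (p i) (p j)
        = ∑ j ∈ Finset.Icc 1 t, dist (p i) (p j) + ∑ j ∈ Finset.Icc (t+1) n, dist (p i) (p j) :=
      fun i => sum_split _ htn
    have hB : 0 ≤ ∑ i ∈ Finset.Icc (t+1) n, ∑ j ∈ Finset.Icc (t+1) n, dist (p i) (p j) :=
      Finset.sum_nonneg fun a _ => Finset.sum_nonneg fun b _ => dist_nonneg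
    have hA' : ∑ i ∈ Finset.Icc 1 t, ∑ j ∈ Finset.Icc (t+1) n, dist (p i) (p j) = A := by
      rw [hA, Finset.sum_comm]
      congr 1; ext i; congr 1; ext j; exact dist_comm _ _
    rw [hsplit]
    simp only [h1, Finset.sum_add_distrib]
    have : ∑ i ∈ Finset.Icc 1 t, ∑ j ∈ Finset.Icc 1 t, dist (p i) (p j) = Qpre p t := rfl
    rw [this, hA']
    linarith
  -- qn * Qt ≤ Rt*Qt + 4*Rt*A
  have hqn : (∑ i ∈ Finset.Icc 1 n, dist (p t) (p i)) * Qpre p t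
      ≤ Rpre p t * Qpre p t + 4 * Rpre p t * A := by
    rw [sum_split (fun i => dist (p t) (p i)) htn, add_mul]
    have h1 : (∑ i ∈ Finset.Icc 1 t, dist (p t) (p i)) * Qpre p t = Rpre p t * Qpre p t := rfl
    rw [h1]
    have h2 : (∑ i ∈ Finset.Icc (t+1) n, dist (p t) (p i)) * Qpre p t
        ≤ 4 * Rpre p t * A := by
      rw [Finset.sum_mul, hA, Finset.mul_sum]
      apply Finset.sum_le_sum
      intro i _
      exact key_pointwise p t ht i
    linarith
  nlinarith

theorem reservoir_selection_bound {V : Type*} [MetricSpace V] (p : ℕ → V) (n t : ℕ)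
    (ht : 1 ≤ t) (htn : t ≤ n)
    (β : ℕ → ℝ) (hβ : ∀ i, 0 ≤ β i ∧ β i ≤ 1)
    (K c : ℝ) (hK : 1 ≤ K) (hc : 0 < c) (hc1 : c ≤ 1)
    (hQt : 0 < Qpre p t) (hQn : 0 < Qpre p n)
    (hβt : (c / K) * (Rpre p t / Qpre p t) ≤ β t)
    (hsum : ∑ i ∈ Finset.Icc (t + 1) n, β i ≤ 1 / 2) :
    (c / (2 * K)) * (Rpre p t / Qpre p t) ≤
        β t * ∏ i ∈ Finset.Icc (t + 1) n, (1 - β i) ∧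
    (c / (4 * K)) * ((∑ i ∈ Finset.Icc 1 n, dist (p t) (p i)) / Qpre p n) ≤
        β t * ∏ i ∈ Finset.Icc (t + 1) n, (1 - β i) := by
  have hK0 : 0 < K := lt_of_lt_of_le one_pos hK
  have hprod : (1:ℝ)/2 ≤ ∏ i ∈ Finset.Icc (t + 1) n, (1 - β i) := by
    have := weierstrass (Finset.Icc (t+1) n) β hβ
    linarith
  have hβt0 : 0 ≤ β t := (hβ t).1
  have hR0 : 0 ≤ Rpre p t := Finset.sum_nonneg fun j _ => dist_nonneg
  have hratio0 : 0 ≤ Rpre p t / Qpre p t := div_nonneg hR0 hQt.le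
  have hβtpos : 0 ≤ (c / K) * (Rpre p t / Qpre p t) :=
    mul_nonneg (div_nonneg hc.le hK0.le) hratio0
  have part1 : (c / (2 * K)) * (Rpre p t / Qpre p t) ≤
      β t * ∏ i ∈ Finset.Icc (t + 1) n, (1 - β i) := by
    have h1 : (c / (2 * K)) * (Rpre p t / Qpre p t)
        = ((c / K) * (Rpre p t / Qpre p t)) * (1/2) := by
      have hck : c / (2 * K) = c / K * (1 / 2) := by
        rw [div_mul_div_comm, mul_one, mul_comm 2 K]
      rw [hck]; ring
    rw [h1]
    calc ((c / K) * (Rpre p t / Qpre p t)) * (1/2) ≤ β t * (1/2) := by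
          apply mul_le_mul_of_nonneg_right hβt; norm_num
      _ ≤ β t * ∏ i ∈ Finset.Icc (t + 1) n, (1 - β i) :=
          mul_le_mul_of_nonneg_left hprod hβt0
  refine ⟨part1, ?_⟩
  have hpr := prefix_ratio p n t ht htn
  have hq : (∑ i ∈ Finset.Icc 1 n, dist (p t) (p i)) / Qpre p n
      ≤ 2 * (Rpre p t / Qpre p t) := by
    have h2 : (2:ℝ) * (Rpre p t / Qpre p t) = (2 * Rpre p t) / Qpre p t := by ring
    rw [h2, div_le_div_iff₀ hQn hQt]
    exact hpr
  have : (c / (4 * K)) * ((∑ i ∈ Finset.Icc 1 n, dist (p t) (p i)) / Qpre p n)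
      ≤ (c / (2 * K)) * (Rpre p t / Qpre p t) := by
    have hck : 0 ≤ c / (4 * K) := div_nonneg hc.le (by linarith)
    calc (c / (4 * K)) * ((∑ i ∈ Finset.Icc 1 n, dist (p t) (p i)) / Qpre p n)
        ≤ (c / (4 * K)) * (2 * (Rpre p t / Qpre p t)) := mul_le_mul_of_nonneg_left hq hck
      _ = (c / (2 * K)) * (Rpre p t / Qpre p t) := by
          have hck2 : c / (4 * K) = c / (2 * K) * (1 / 2) := by
            rw [div_mul_div_comm, mul_one]
            congr 1; ring
          rw [hck2]; ring
  linarith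
end
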